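/- arXiv:2301.09214 — 2 statements merged into one kernel-verified Lean document; each statement's English description precedes it below -/
import Mathlib

section
/- The pathwise value function satisfies the following modulus-of-continuity estimate in the time variable, uniformly in space: for all 0 ≤ t ≤ t′ ≤ T and every x ∈ ℝⁿ, |U(t,x) − U(t′,x)| ≤ (L_V T + L_S)(C(t′ − t) + √ν ‖W(t′) − W(t)‖) + (C²/2 + ‖V‖_∞)(t′ − t). -/
open MeasureTheory Set

/-- The controlled path `Z_s^{t,x,u} = x + ∫_t^s u(r) dr + √ν (W(s) - W(t))`. -/
noncomputable def ctrlPath {n : ℕ} (ν : ℝ) (W : ℝ → EuclideanSpace ℝ (Fin n))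
    (t : ℝ) (x : EuclideanSpace ℝ (Fin n)) (u : ℝ → EuclideanSpace ℝ (Fin n))
    (s : ℝ) : EuclideanSpace ℝ (Fin n) :=
  x + (∫ r in t..s, u r) + Real.sqrt ν • (W s - W t)

/-- The pathwise action `J(t,x,u)`. -/
noncomputable def action {n : ℕ} (T ν : ℝ) (W : ℝ → EuclideanSpace ℝ (Fin n))
    (V S : EuclideanSpace ℝ (Fin n) → ℝ) (t : ℝ) (x : EuclideanSpace ℝ (Fin n))
    (u : ℝ → EuclideanSpace ℝ (Fin n)) : ℝ :=
  (∫ s in t..T, (‖u s‖ ^ 2 / 2 + V (ctrlPath ν W t x u s))) + S (ctrlPath ν W t x u T)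

/-- An admissible control: measurable and uniformly bounded by `C`. -/
def IsAdmissible {n : ℕ} (C : ℝ) (u : ℝ → EuclideanSpace ℝ (Fin n)) : Prop :=
  Measurable u ∧ ∀ s, ‖u s‖ ≤ C

/-- The pathwise value function `U(t,x) = inf { J(t,x,u) : u admissible }`. -/
noncomputable def value {n : ℕ} (T ν C : ℝ) (W : ℝ → EuclideanSpace ℝ (Fin n))
    (V S : EuclideanSpace ℝ (Fin n) → ℝ) (t : ℝ) (x : EuclideanSpace ℝ (Fin n)) : ℝ :=
  sInf {r | ∃ u : ℝ → EuclideanSpace ℝ (Fin n), IsAdmissible C u ∧ r = action T ν W V S t x u}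

lemma adm_intervalIntegrable {n : ℕ} {C : ℝ} {u : ℝ → EuclideanSpace ℝ (Fin n)}
    (hu : IsAdmissible C u) (a b : ℝ) : IntervalIntegrable u volume a b := by
  rw [intervalIntegrable_iff]
  refine Measure.integrableOn_of_bounded ?_ hu.1.aestronglyMeasurable (ae_of_all _ hu.2)
  have : Set.uIoc a b = Ioc (min a b) (max a b) := rfl
  rw [this, Real.volume_Ioc]
  exact ENNReal.ofReal_ne_top


lemma normsq_intervalIntegrable {n : ℕ} {C : ℝ} {u : ℝ → EuclideanSpace ℝ (Fin n)}
    (hu : IsAdmissible C u) (hC : 0 < C) (a b : ℝ) :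
    IntervalIntegrable (fun s => ‖u s‖ ^ 2 / 2) volume a b := by
  rw [intervalIntegrable_iff]
  refine Measure.integrableOn_of_bounded (M := C ^ 2 / 2) ?_
    ((hu.1.norm.pow_const 2).div_const 2).aestronglyMeasurable
    (ae_of_all _ fun s => ?_)
  · have : Set.uIoc a b = Ioc (min a b) (max a b) := rfl
    rw [this, Real.volume_Ioc]
    exact ENNReal.ofReal_ne_top
  · have h1 : ‖u s‖ ^ 2 ≤ C ^ 2 := by
      have := hu.2 s
      nlinarith [norm_nonneg (u s)]
    have h0 : (0:ℝ) ≤ ‖u s‖ ^ 2 / 2 := by positivity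
    rw [Real.norm_eq_abs, abs_of_nonneg h0]
    linarith


lemma lip_continuous {n : ℕ} {f : EuclideanSpace ℝ (Fin n) → ℝ} {L : ℝ}
    (h : ∀ y y', |f y - f y'| ≤ L * ‖y - y'‖) : Continuous f := by
  have : LipschitzWith (Real.toNNReal L) f := by
    apply LipschitzWith.of_dist_le_mul
    intro y y'
    rw [Real.dist_eq, dist_eq_norm]
    calc |f y - f y'| ≤ L * ‖y - y'‖ := h y y'
      _ ≤ Real.toNNReal L * ‖y - y'‖ :=
        mul_le_mul_of_nonneg_right (Real.le_coe_toNNReal L) (norm_nonneg _)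
  exact this.continuous


lemma ctrlPath_continuousOn {n : ℕ} {T ν C : ℝ} {W : ℝ → EuclideanSpace ℝ (Fin n)}
    (hW : ContinuousOn W (Icc 0 T)) {u : ℝ → EuclideanSpace ℝ (Fin n)}
    (hu : IsAdmissible C u) (t : ℝ) (x : EuclideanSpace ℝ (Fin n)) :
    ContinuousOn (ctrlPath ν W t x u) (Icc 0 T) := by
  unfold ctrlPath
  refine ContinuousOn.add (ContinuousOn.add continuousOn_const ?_) ?_
  · exact (intervalIntegral.continuous_primitive (adm_intervalIntegrable hu) t).continuousOn
  · exact (hW.sub continuousOn_const).const_smul (Real.sqrt ν)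


lemma F_intervalIntegrable {n : ℕ} {T ν C : ℝ} {W : ℝ → EuclideanSpace ℝ (Fin n)}
    (hW : ContinuousOn W (Icc 0 T)) {u : ℝ → EuclideanSpace ℝ (Fin n)}
    (hu : IsAdmissible C u) (hC : 0 < C) {V : EuclideanSpace ℝ (Fin n) → ℝ} {L_V : ℝ}
    (hVlip : ∀ y y', |V y - V y'| ≤ L_V * ‖y - y'‖)
    (t : ℝ) (x : EuclideanSpace ℝ (Fin n)) {a b : ℝ} (hab : uIcc a b ⊆ Icc 0 T) :
    IntervalIntegrable (fun s => ‖u s‖ ^ 2 / 2 + V (ctrlPath ν W t x u s)) volume a b := by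
  refine (normsq_intervalIntegrable hu hC a b).add ?_
  exact (((lip_continuous hVlip).comp_continuousOn
    (ctrlPath_continuousOn hW hu t x)).mono hab).intervalIntegrable


lemma action_diff_bound
    {n : ℕ} {T ν C L_V L_S Vbound : ℝ}
    (hC : 0 < C)
    {W : ℝ → EuclideanSpace ℝ (Fin n)} (hW : ContinuousOn W (Icc 0 T))
    {V S : EuclideanSpace ℝ (Fin n) → ℝ}
    (hVlip : ∀ y y', |V y - V y'| ≤ L_V * ‖y - y'‖)
    (hVbdd : ∀ y, |V y| ≤ Vbound)
    (hSlip : ∀ y y', |S y - S y'| ≤ L_S * ‖y - y'‖)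
    (hLV : 0 ≤ L_V)
    {t t' : ℝ} (ht : 0 ≤ t) (htt' : t ≤ t') (ht' : t' ≤ T)
    (x : EuclideanSpace ℝ (Fin n))
    {u v : ℝ → EuclideanSpace ℝ (Fin n)} (hu : IsAdmissible C u) (hv : IsAdmissible C v)
    (heq : ∀ r, t' ≤ r → v r = u r) :
    |action T ν W V S t x v - action T ν W V S t' x u| ≤
      (C ^ 2 / 2 + Vbound) * (t' - t) +
        (L_V * T + L_S) * ‖(∫ r in t..t', v r) + Real.sqrt ν • (W t' - W t)‖ := by
  have htT : t ≤ T := le_trans htt' ht'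
  have ht'0 : 0 ≤ t' := le_trans ht htt'
  set d := (∫ r in t..t', v r) + Real.sqrt ν • (W t' - W t) with hd
  have hZ : ∀ s, t' ≤ s → ctrlPath ν W t x v s = ctrlPath ν W t' x u s + d := by
    intro s hs
    have h1 : (∫ r in t..s, v r) = (∫ r in t..t', v r) + ∫ r in t'..s, v r :=
      (intervalIntegral.integral_add_adjacent_intervals
        (adm_intervalIntegrable hv t t') (adm_intervalIntegrable hv t' s)).symm
    have h2 : (∫ r in t'..s, v r) = ∫ r in t'..s, u r := by
      apply intervalIntegral.integral_congr
      intro r hr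
      exact heq r (by rw [uIcc_of_le hs] at hr; exact hr.1)
    simp only [ctrlPath, hd, h1, h2]
    module
  set F := fun s => ‖v s‖ ^ 2 / 2 + V (ctrlPath ν W t x v s) with hF
  set G := fun s => ‖u s‖ ^ 2 / 2 + V (ctrlPath ν W t' x u s) with hG
  have hsub1 : uIcc t t' ⊆ Icc 0 T := by
    rw [uIcc_of_le htt']; exact Icc_subset_Icc ht ht'
  have hsub2 : uIcc t' T ⊆ Icc 0 T := by
    rw [uIcc_of_le ht']; exact Icc_subset_Icc ht'0 le_rfl
  have hFi1 : IntervalIntegrable F volume t t' :=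
    F_intervalIntegrable hW hv hC hVlip t x hsub1
  have hFi2 : IntervalIntegrable F volume t' T :=
    F_intervalIntegrable hW hv hC hVlip t x hsub2
  have hGi2 : IntervalIntegrable G volume t' T :=
    F_intervalIntegrable hW hu hC hVlip t' x hsub2
  have hsplit : (∫ s in t..T, F s) = (∫ s in t..t', F s) + ∫ s in t'..T, F s :=
    (intervalIntegral.integral_add_adjacent_intervals hFi1 hFi2).symm
  have key : action T ν W V S t x v - action T ν W V S t' x u =
      (∫ s in t..t', F s) + ((∫ s in t'..T, F s) - ∫ s in t'..T, G s) +
        (S (ctrlPath ν W t x v T) - S (ctrlPath ν W t' x u T)) := by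
    simp only [action, ← hF, ← hG]
    rw [hsplit]; ring
  -- Bound 1
  have hB1 : |∫ s in t..t', F s| ≤ (C ^ 2 / 2 + Vbound) * (t' - t) := by
    have := intervalIntegral.norm_integral_le_of_norm_le_const
      (C := C ^ 2 / 2 + Vbound) (f := F) (a := t) (b := t') ?_
    · rwa [Real.norm_eq_abs, abs_of_nonneg (show (0:ℝ) ≤ t' - t by linarith)] at this
    · intro s _
      have h1 : ‖v s‖ ^ 2 ≤ C ^ 2 := by nlinarith [hv.2 s, norm_nonneg (v s)]
      have h2 := hVbdd (ctrlPath ν W t x v s)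
      have := abs_add_le (‖v s‖ ^ 2 / 2) (V (ctrlPath ν W t x v s))
      have h3 : |‖v s‖ ^ 2 / 2| = ‖v s‖ ^ 2 / 2 := abs_of_nonneg (by positivity)
      rw [Real.norm_eq_abs]
      calc |F s| ≤ |‖v s‖ ^ 2 / 2| + |V (ctrlPath ν W t x v s)| := abs_add_le _ _
        _ ≤ C ^ 2 / 2 + Vbound := by rw [h3]; linarith
  -- Bound 2
  have hB2 : |(∫ s in t'..T, F s) - ∫ s in t'..T, G s| ≤ L_V * ‖d‖ * (T - t') := by
    rw [← intervalIntegral.integral_sub hFi2 hGi2]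
    have := intervalIntegral.norm_integral_le_of_norm_le_const
      (C := L_V * ‖d‖) (f := fun s => F s - G s) (a := t') (b := T) ?_
    · rwa [Real.norm_eq_abs, abs_of_nonneg (show (0:ℝ) ≤ T - t' by linarith)] at this
    · intro s hs
      rw [uIoc_of_le ht'] at hs
      have hz := hZ s (le_of_lt hs.1)
      have hvu : v s = u s := heq s (le_of_lt hs.1)
      have : F s - G s = V (ctrlPath ν W t x v s) - V (ctrlPath ν W t' x u s) := by
        simp only [hF, hG, hvu]; ring
      show |F s - G s| ≤ L_V * ‖d‖
      rw [this, hz]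
      calc |V (ctrlPath ν W t' x u s + d) - V (ctrlPath ν W t' x u s)| ≤
          L_V * ‖ctrlPath ν W t' x u s + d - ctrlPath ν W t' x u s‖ := hVlip _ _
        _ = L_V * ‖d‖ := by rw [add_sub_cancel_left]
  -- Bound 3
  have hB3 : |S (ctrlPath ν W t x v T) - S (ctrlPath ν W t' x u T)| ≤ L_S * ‖d‖ := by
    rw [hZ T ht']
    calc |S (ctrlPath ν W t' x u T + d) - S (ctrlPath ν W t' x u T)| ≤
        L_S * ‖ctrlPath ν W t' x u T + d - ctrlPath ν W t' x u T‖ := hSlip _ _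
      _ = L_S * ‖d‖ := by rw [add_sub_cancel_left]
  rw [key]
  have habs := abs_add_le ((∫ s in t..t', F s) + ((∫ s in t'..T, F s) - ∫ s in t'..T, G s))
    (S (ctrlPath ν W t x v T) - S (ctrlPath ν W t' x u T))
  have habs2 := abs_add_le (∫ s in t..t', F s) ((∫ s in t'..T, F s) - ∫ s in t'..T, G s)
  have hdn : 0 ≤ ‖d‖ := norm_nonneg d
  nlinarith [mul_nonneg hLV hdn]


lemma lip_nonneg {n : ℕ} (hn : 1 ≤ n) {f : EuclideanSpace ℝ (Fin n) → ℝ} {L : ℝ}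
    (h : ∀ y y', |f y - f y'| ≤ L * ‖y - y'‖) : 0 ≤ L := by
  set e : EuclideanSpace ℝ (Fin n) := EuclideanSpace.single ⟨0, hn⟩ (1:ℝ) with he
  have hnorm : ‖e - 0‖ = 1 := by
    rw [sub_zero, he, EuclideanSpace.norm_single]; norm_num
  have := h e 0
  rw [hnorm, mul_one] at this
  exact le_trans (abs_nonneg _) this


lemma action_lower {n : ℕ} {T ν C L_V L_S Vbound : ℝ}
    (hC : 0 < C)
    {W : ℝ → EuclideanSpace ℝ (Fin n)} (hW : ContinuousOn W (Icc 0 T))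
    {V S : EuclideanSpace ℝ (Fin n) → ℝ}
    (hVlip : ∀ y y', |V y - V y'| ≤ L_V * ‖y - y'‖)
    (hVbdd : ∀ y, |V y| ≤ Vbound)
    (hSlip : ∀ y y', |S y - S y'| ≤ L_S * ‖y - y'‖)
    (hLS : 0 ≤ L_S)
    {τ : ℝ} (hτ0 : 0 ≤ τ) (hτT : τ ≤ T)
    (x : EuclideanSpace ℝ (Fin n))
    {u : ℝ → EuclideanSpace ℝ (Fin n)} (hu : IsAdmissible C u) :
    S x - (C ^ 2 / 2 + Vbound) * (T - τ) -
      L_S * (C * (T - τ) + Real.sqrt ν * ‖W T - W τ‖) ≤ action T ν W V S τ x u := by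
  have hsub : uIcc τ T ⊆ Icc 0 T := by
    rw [uIcc_of_le hτT]; exact Icc_subset_Icc hτ0 le_rfl
  set F := fun s => ‖u s‖ ^ 2 / 2 + V (ctrlPath ν W τ x u s) with hF
  have hInt : |∫ s in τ..T, F s| ≤ (C ^ 2 / 2 + Vbound) * (T - τ) := by
    have := intervalIntegral.norm_integral_le_of_norm_le_const
      (C := C ^ 2 / 2 + Vbound) (f := F) (a := τ) (b := T) ?_
    · rwa [Real.norm_eq_abs, abs_of_nonneg (show (0:ℝ) ≤ T - τ by linarith)] at this
    · intro s _
      have h1 : ‖u s‖ ^ 2 ≤ C ^ 2 := by nlinarith [hu.2 s, norm_nonneg (u s)]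
      have h2 := hVbdd (ctrlPath ν W τ x u s)
      have h3 : |‖u s‖ ^ 2 / 2| = ‖u s‖ ^ 2 / 2 := abs_of_nonneg (by positivity)
      rw [Real.norm_eq_abs]
      calc |F s| ≤ |‖u s‖ ^ 2 / 2| + |V (ctrlPath ν W τ x u s)| := abs_add_le _ _
        _ ≤ C ^ 2 / 2 + Vbound := by rw [h3]; linarith
  have hnormI : ‖∫ r in τ..T, u r‖ ≤ C * (T - τ) := by
    have := intervalIntegral.norm_integral_le_of_norm_le_const
      (C := C) (f := u) (a := τ) (b := T) (fun s _ => hu.2 s)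
    rwa [abs_of_nonneg (show (0:ℝ) ≤ T - τ by linarith)] at this
  have hZx : ctrlPath ν W τ x u T - x = (∫ r in τ..T, u r) + Real.sqrt ν • (W T - W τ) := by
    simp only [ctrlPath]; abel
  have hZnorm : ‖ctrlPath ν W τ x u T - x‖ ≤ C * (T - τ) + Real.sqrt ν * ‖W T - W τ‖ := by
    rw [hZx]
    calc ‖(∫ r in τ..T, u r) + Real.sqrt ν • (W T - W τ)‖ ≤
        ‖∫ r in τ..T, u r‖ + ‖Real.sqrt ν • (W T - W τ)‖ := norm_add_le _ _
      _ ≤ C * (T - τ) + Real.sqrt ν * ‖W T - W τ‖ := by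
          rw [norm_smul, Real.norm_eq_abs, abs_of_nonneg (Real.sqrt_nonneg ν)]
          linarith
  have hS : |S (ctrlPath ν W τ x u T) - S x| ≤
      L_S * (C * (T - τ) + Real.sqrt ν * ‖W T - W τ‖) :=
    le_trans (hSlip _ _) (mul_le_mul_of_nonneg_left hZnorm hLS)
  have h1 := neg_abs_le (∫ s in τ..T, F s)
  have h2 := neg_abs_le (S (ctrlPath ν W τ x u T) - S x)
  simp only [action, ← hF]
  linarith


/-- time modulus-of-continuity estimate, uniform in space:
for `0 ≤ t ≤ t′ ≤ T`,
`|U(t,x) − U(t′,x)| ≤ (L_V T + L_S)(C(t′ − t) + √ν ‖W(t′) − W(t)‖) + (C²/2 + ‖V‖_∞)(t′ − t)`. -/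
theorem statement4
    (n : ℕ) (hn : 1 ≤ n) (T ν C L_V L_S Vbound : ℝ)
    (hT : 0 < T) (hν : 0 < ν) (hC : 0 < C)
    (W : ℝ → EuclideanSpace ℝ (Fin n)) (hW : ContinuousOn W (Icc 0 T))
    (V S : EuclideanSpace ℝ (Fin n) → ℝ)
    (hVlip : ∀ y y', |V y - V y'| ≤ L_V * ‖y - y'‖)
    (hVbdd : ∀ y, |V y| ≤ Vbound)
    (hSlip : ∀ y y', |S y - S y'| ≤ L_S * ‖y - y'‖)
    (t t' : ℝ) (ht : 0 ≤ t) (htt' : t ≤ t') (ht' : t' ≤ T)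
    (x : EuclideanSpace ℝ (Fin n)) :
    |value T ν C W V S t x - value T ν C W V S t' x| ≤
      (L_V * T + L_S) * (C * (t' - t) + Real.sqrt ν * ‖W t' - W t‖) +
        (C ^ 2 / 2 + Vbound) * (t' - t) := by
  have hLV := lip_nonneg hn hVlip
  have hLS := lip_nonneg hn hSlip
  have hV0 : 0 ≤ Vbound := le_trans (abs_nonneg _) (hVbdd x)
  have ht'0 : 0 ≤ t' := le_trans ht htt'
  have htT : t ≤ T := le_trans htt' ht'
  set A := {r | ∃ u : ℝ → EuclideanSpace ℝ (Fin n),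
    IsAdmissible C u ∧ r = action T ν W V S t x u} with hA
  set B := {r | ∃ u : ℝ → EuclideanSpace ℝ (Fin n),
    IsAdmissible C u ∧ r = action T ν W V S t' x u} with hB
  set K := (L_V * T + L_S) * (C * (t' - t) + Real.sqrt ν * ‖W t' - W t‖) +
    (C ^ 2 / 2 + Vbound) * (t' - t) with hK
  clear_value K
  have hzero : IsAdmissible C (fun _ : ℝ => (0 : EuclideanSpace ℝ (Fin n))) :=
    ⟨measurable_const, fun s => by simp; linarith⟩
  have hAne : A.Nonempty := ⟨_, _, hzero, rfl⟩
  have hBne : B.Nonempty := ⟨_, _, hzero, rfl⟩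
  have hAbdd : BddBelow A := by
    refine ⟨S x - (C ^ 2 / 2 + Vbound) * (T - t) -
      L_S * (C * (T - t) + Real.sqrt ν * ‖W T - W t‖), ?_⟩
    rintro r ⟨u, hu, rfl⟩
    exact action_lower hC hW hVlip hVbdd hSlip hLS ht htT x hu
  have hBbdd : BddBelow B := by
    refine ⟨S x - (C ^ 2 / 2 + Vbound) * (T - t') -
      L_S * (C * (T - t') + Real.sqrt ν * ‖W T - W t'‖), ?_⟩
    rintro r ⟨u, hu, rfl⟩
    exact action_lower hC hW hVlip hVbdd hSlip hLS ht'0 ht' x hu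
  have hsmul : ‖Real.sqrt ν • (W t' - W t)‖ = Real.sqrt ν * ‖W t' - W t‖ := by
    rw [norm_smul, Real.norm_eq_abs, abs_of_nonneg (Real.sqrt_nonneg ν)]
  have hLVT : 0 ≤ L_V * T + L_S := by nlinarith
  have hCtt : 0 ≤ C * (t' - t) := by nlinarith
  -- claim 1
  have claim1 : ∀ b ∈ B, sInf A ≤ b + K := by
    rintro b ⟨u, hu, rfl⟩
    set v := (Ici t').indicator u with hv
    have hvadm : IsAdmissible C v := by
      refine ⟨hu.1.indicator measurableSet_Ici, fun s => ?_⟩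
      by_cases h : s ∈ Ici t'
      · rw [hv, indicator_of_mem h]; exact hu.2 s
      · rw [hv, indicator_of_notMem h]; simp; linarith
    have heq : ∀ r, t' ≤ r → v r = u r := fun r hr => indicator_of_mem hr u
    have hzint : (∫ r in t..t', v r) = (0 : EuclideanSpace ℝ (Fin n)) := by
      have hne : ∀ᵐ r : ℝ, r ≠ t' := by
        rw [MeasureTheory.ae_iff]
        simp only [ne_eq, not_not, setOf_eq_eq_singleton]
        exact measure_singleton t'
      have : (∫ r in t..t', v r) = ∫ r in t..t', (0 : EuclideanSpace ℝ (Fin n)) := by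
        apply intervalIntegral.integral_congr_ae
        filter_upwards [hne] with r hr hrmem
        rw [uIoc_of_le htt'] at hrmem
        have hlt : r < t' := lt_of_le_of_ne hrmem.2 hr
        exact indicator_of_notMem (by simpa using not_le.mpr hlt) u
      rw [this, intervalIntegral.integral_zero]
    have key := action_diff_bound (ν := ν) hC hW hVlip hVbdd hSlip hLV ht htt' ht' x hu hvadm heq
    rw [hzint, zero_add, hsmul] at key
    have hmem : action T ν W V S t x v ∈ A := ⟨v, hvadm, rfl⟩
    have h1 := csInf_le hAbdd hmem
    have h2 := (abs_le.mp key).2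
    have h3 : (L_V * T + L_S) * (Real.sqrt ν * ‖W t' - W t‖) ≤
        (L_V * T + L_S) * (C * (t' - t) + Real.sqrt ν * ‖W t' - W t‖) := by
      apply mul_le_mul_of_nonneg_left _ hLVT
      linarith
    linarith
  -- claim 2
  have claim2 : ∀ a ∈ A, sInf B ≤ a + K := by
    rintro a ⟨u, hu, rfl⟩
    have key := action_diff_bound (ν := ν) hC hW hVlip hVbdd hSlip hLV ht htt' ht' x hu hu
      (fun r _ => rfl)
    have hnormI : ‖∫ r in t..t', u r‖ ≤ C * (t' - t) := by
      have := intervalIntegral.norm_integral_le_of_norm_le_const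
        (C := C) (f := u) (a := t) (b := t') (fun s _ => hu.2 s)
      rwa [abs_of_nonneg (show (0:ℝ) ≤ t' - t by linarith)] at this
    have hnd : ‖(∫ r in t..t', u r) + Real.sqrt ν • (W t' - W t)‖ ≤
        C * (t' - t) + Real.sqrt ν * ‖W t' - W t‖ := by
      calc ‖(∫ r in t..t', u r) + Real.sqrt ν • (W t' - W t)‖ ≤
          ‖∫ r in t..t', u r‖ + ‖Real.sqrt ν • (W t' - W t)‖ := norm_add_le _ _
        _ ≤ _ := by rw [hsmul]; linarith
    have hmem : action T ν W V S t' x u ∈ B := ⟨u, hu, rfl⟩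
    have h1 := csInf_le hBbdd hmem
    have h2 := (abs_le.mp key).1
    have h3 := mul_le_mul_of_nonneg_left hnd hLVT
    linarith
  have hAB : sInf A ≤ sInf B + K := by
    have hlb : ∀ b ∈ B, sInf A - K ≤ b := fun b hb => by linarith [claim1 b hb]
    linarith [le_csInf hBne hlb]
  have hBA : sInf B ≤ sInf A + K := by
    have hlb : ∀ a ∈ A, sInf B - K ≤ a := fun a ha => by linarith [claim2 a ha]
    linarith [le_csInf hAne hlb]
  show |sInf A - sInf B| ≤ K
  exact abs_sub_le_iff.mpr ⟨by linarith, by linarith⟩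
end

section
/- (Bellman's optimality principle.) For every t ∈ [0,T], every δ > 0 with t + δ ≤ T, and every x ∈ ℝⁿ, the pathwise value function satisfies U(t,x) = inf{ ∫_t^{t+δ} (‖u(s)‖²/2 + V(Z_s^{t,x,u})) ds + U(t+δ, Z_{t+δ}^{t,x,u}) : u admissible on [t,T] }. -/
open MeasureTheory Set

lemma lagr_bound {n : ℕ} {ν C Vbound : ℝ} {W : ℝ → EuclideanSpace ℝ (Fin n)}
    {V : EuclideanSpace ℝ (Fin n) → ℝ} (hVbdd : ∀ y, |V y| ≤ Vbound)
    {u : ℝ → EuclideanSpace ℝ (Fin n)} (hu : IsAdmissible C u)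
    (t' : ℝ) (x' : EuclideanSpace ℝ (Fin n)) (s : ℝ) :
    |‖u s‖ ^ 2 / 2 + V (ctrlPath ν W t' x' u s)| ≤ C ^ 2 / 2 + Vbound := by
  have h1 := hu.2 s
  have h2 := hVbdd (ctrlPath ν W t' x' u s)
  have h3 := norm_nonneg (u s)
  have := abs_add_le (‖u s‖ ^ 2 / 2) (V (ctrlPath ν W t' x' u s))
  have h4 : |‖u s‖ ^ 2 / 2| = ‖u s‖ ^ 2 / 2 := abs_of_nonneg (by positivity)
  nlinarith

lemma lagr_intervalIntegrable {n : ℕ} {T ν C Vbound : ℝ}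
    {W : ℝ → EuclideanSpace ℝ (Fin n)} {V : EuclideanSpace ℝ (Fin n) → ℝ}
    (hW : ContinuousOn W (Icc 0 T)) (hV : Continuous V) (hVbdd : ∀ y, |V y| ≤ Vbound)
    {u : ℝ → EuclideanSpace ℝ (Fin n)} (hu : IsAdmissible C u)
    (t' : ℝ) (x' : EuclideanSpace ℝ (Fin n)) {a b : ℝ}
    (ha : a ∈ Icc 0 T) (hb : b ∈ Icc 0 T) :
    IntervalIntegrable (fun s => ‖u s‖ ^ 2 / 2 + V (ctrlPath ν W t' x' u s)) volume a b := by
  have hsub : uIoc a b ⊆ Icc 0 T :=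
    (Ioc_subset_Icc_self).trans ((Set.ordConnected_Icc.uIcc_subset ha hb))
  have hWm : AEStronglyMeasurable W (volume.restrict (uIoc a b)) :=
    (hW.aestronglyMeasurable measurableSet_Icc).mono_measure
      (Measure.restrict_mono hsub le_rfl)
  have hprim : Continuous fun s => ∫ r in t'..s, u r :=
    intervalIntegral.continuous_primitive (fun a b => adm_intervalIntegrable hu a b) t'
  have hZ : AEStronglyMeasurable (fun s => ctrlPath ν W t' x' u s)
      (volume.restrict (uIoc a b)) := by
    unfold ctrlPath
    exact (aestronglyMeasurable_const.add hprim.aestronglyMeasurable).add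
      ((hWm.sub aestronglyMeasurable_const).const_smul (Real.sqrt ν))
  have hmeas : AEStronglyMeasurable
      (fun s => ‖u s‖ ^ 2 / 2 + V (ctrlPath ν W t' x' u s)) (volume.restrict (uIoc a b)) :=
    ((hu.1.norm.pow_const 2).div_const 2).aestronglyMeasurable.add
      (hV.comp_aestronglyMeasurable hZ)
  rw [intervalIntegrable_iff]
  refine Integrable.mono' ((integrableOn_const measure_Ioc_lt_top.ne) :
    IntegrableOn (fun _ => C ^ 2 / 2 + Vbound) (uIoc a b) volume) hmeas ?_
  refine Filter.Eventually.of_forall fun s => ?_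
  rw [Real.norm_eq_abs]
  exact lagr_bound (ν := ν) (W := W) hVbdd hu t' x' s

lemma ctrlPath_glue {n : ℕ} {ν C : ℝ} {W : ℝ → EuclideanSpace ℝ (Fin n)}
    {u : ℝ → EuclideanSpace ℝ (Fin n)} (hu : IsAdmissible C u)
    (t a : ℝ) (x : EuclideanSpace ℝ (Fin n)) (s : ℝ) :
    ctrlPath ν W a (ctrlPath ν W t x u a) u s = ctrlPath ν W t x u s := by
  unfold ctrlPath
  rw [← intervalIntegral.integral_add_adjacent_intervals
    (adm_intervalIntegrable hu t a) (adm_intervalIntegrable hu a s)]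
  simp only [smul_sub]
  abel

lemma action_split {n : ℕ} {T ν C Vbound : ℝ} {W : ℝ → EuclideanSpace ℝ (Fin n)}
    {V S : EuclideanSpace ℝ (Fin n) → ℝ}
    (hW : ContinuousOn W (Icc 0 T)) (hV : Continuous V) (hVbdd : ∀ y, |V y| ≤ Vbound)
    {u : ℝ → EuclideanSpace ℝ (Fin n)} (hu : IsAdmissible C u)
    {t a : ℝ} (x : EuclideanSpace ℝ (Fin n))
    (ht : t ∈ Icc 0 T) (ha : a ∈ Icc 0 T) :
    action T ν W V S t x u =
      (∫ s in t..a, (‖u s‖ ^ 2 / 2 + V (ctrlPath ν W t x u s))) +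
        action T ν W V S a (ctrlPath ν W t x u a) u := by
  have hTT : T ∈ Icc 0 T := ⟨(ht.1.trans ht.2), le_rfl⟩
  unfold action
  simp only [ctrlPath_glue hu]
  rw [← intervalIntegral.integral_add_adjacent_intervals
    (lagr_intervalIntegrable hW hV hVbdd hu t x ht ha)
    (lagr_intervalIntegrable hW hV hVbdd hu t x ha hTT)]
  ring

lemma action_lb {n : ℕ} {T ν C Vbound L_S : ℝ} {W : ℝ → EuclideanSpace ℝ (Fin n)}
    {V S : EuclideanSpace ℝ (Fin n) → ℝ}
    (hW : ContinuousOn W (Icc 0 T)) (hV : Continuous V) (hVbdd : ∀ y, |V y| ≤ Vbound)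
    (hSlip : ∀ y y', |S y - S y'| ≤ L_S * ‖y - y'‖) (hLS : 0 ≤ L_S)
    {u : ℝ → EuclideanSpace ℝ (Fin n)} (hu : IsAdmissible C u) (hC : 0 ≤ C)
    {t' : ℝ} (ht' : t' ∈ Icc 0 T) (x' : EuclideanSpace ℝ (Fin n)) :
    S (x' + Real.sqrt ν • (W T - W t')) - L_S * (C * (T - t')) - Vbound * (T - t')
      ≤ action T ν W V S t' x' u := by
  have hTT : T ∈ Icc 0 T := ⟨ht'.1.trans ht'.2, le_rfl⟩
  have hnormI : ‖∫ r in t'..T, u r‖ ≤ C * (T - t') := by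
    have h := intervalIntegral.norm_integral_le_of_norm_le_const
      (f := u) (a := t') (b := T) (C := C) (fun s _ => hu.2 s)
    rwa [abs_of_nonneg (by linarith [ht'.2])] at h
  have hdiff : ctrlPath ν W t' x' u T - (x' + Real.sqrt ν • (W T - W t'))
      = ∫ r in t'..T, u r := by
    unfold ctrlPath; abel
  have hdist : |S (ctrlPath ν W t' x' u T) - S (x' + Real.sqrt ν • (W T - W t'))|
      ≤ L_S * (C * (T - t')) := by
    refine (hSlip _ _).trans ?_
    rw [hdiff]
    exact mul_le_mul_of_nonneg_left hnormI hLS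
  have hint : (-Vbound) * (T - t')
      ≤ ∫ s in t'..T, (‖u s‖ ^ 2 / 2 + V (ctrlPath ν W t' x' u s)) := by
    have h1 : (∫ s in t'..T, (-Vbound : ℝ))
        ≤ ∫ s in t'..T, (‖u s‖ ^ 2 / 2 + V (ctrlPath ν W t' x' u s)) := by
      refine intervalIntegral.integral_mono_on ht'.2 intervalIntegrable_const
        (lagr_intervalIntegrable hW hV hVbdd hu t' x' ht' hTT) fun s _ => ?_
      have h2 := (abs_le.1 (hVbdd (ctrlPath ν W t' x' u s))).1
      nlinarith [sq_nonneg ‖u s‖]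
    rw [intervalIntegral.integral_const, smul_eq_mul] at h1
    linarith [h1]
  have habs := (abs_le.1 hdist).1
  unfold action
  linarith

lemma value_bddBelow {n : ℕ} {T ν C Vbound L_S : ℝ} {W : ℝ → EuclideanSpace ℝ (Fin n)}
    {V S : EuclideanSpace ℝ (Fin n) → ℝ}
    (hW : ContinuousOn W (Icc 0 T)) (hV : Continuous V) (hVbdd : ∀ y, |V y| ≤ Vbound)
    (hSlip : ∀ y y', |S y - S y'| ≤ L_S * ‖y - y'‖) (hLS : 0 ≤ L_S) (hC : 0 ≤ C)
    {t' : ℝ} (ht' : t' ∈ Icc 0 T) (x' : EuclideanSpace ℝ (Fin n)) :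
    BddBelow {r | ∃ u : ℝ → EuclideanSpace ℝ (Fin n), IsAdmissible C u ∧
      r = action T ν W V S t' x' u} := by
  refine ⟨S (x' + Real.sqrt ν • (W T - W t')) - L_S * (C * (T - t')) - Vbound * (T - t'),
    fun r hr => ?_⟩
  obtain ⟨u, hu, rfl⟩ := hr
  exact action_lb hW hV hVbdd hSlip hLS hu hC ht' x'

lemma zero_admissible {n : ℕ} {C : ℝ} (hC : 0 ≤ C) :
    IsAdmissible C (fun _ : ℝ => (0 : EuclideanSpace ℝ (Fin n))) :=
  ⟨measurable_const, fun _ => by simpa using hC⟩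

/-- Bellman's optimality principle: for `t + δ ≤ T`,
`U(t,x) = inf { ∫_t^{t+δ} (‖u(s)‖²/2 + V(Z_s)) ds + U(t+δ, Z_{t+δ}) : u admissible }`. -/
theorem statement7
    (n : ℕ) (hn : 1 ≤ n) (T ν C L_V L_S Vbound : ℝ)
    (hT : 0 < T) (hν : 0 < ν) (hC : 0 < C)
    (W : ℝ → EuclideanSpace ℝ (Fin n)) (hW : ContinuousOn W (Icc 0 T))
    (V S : EuclideanSpace ℝ (Fin n) → ℝ)
    (hVlip : ∀ y y', |V y - V y'| ≤ L_V * ‖y - y'‖)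
    (hVbdd : ∀ y, |V y| ≤ Vbound)
    (hSlip : ∀ y y', |S y - S y'| ≤ L_S * ‖y - y'‖)
    (t : ℝ) (ht : t ∈ Icc 0 T) (δ : ℝ) (hδ : 0 < δ) (htδ : t + δ ≤ T)
    (x : EuclideanSpace ℝ (Fin n)) :
    value T ν C W V S t x =
      sInf {r | ∃ u : ℝ → EuclideanSpace ℝ (Fin n), IsAdmissible C u ∧
        r = (∫ s in t..(t + δ), (‖u s‖ ^ 2 / 2 + V (ctrlPath ν W t x u s))) +
          value T ν C W V S (t + δ) (ctrlPath ν W t x u (t + δ))} := by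
  -- continuity of V from its Lipschitz bound
  have hVc : Continuous V := by
    refine (LipschitzWith.of_dist_le_mul (K := L_V.toNNReal) (f := V) fun a b => ?_).continuous
    rw [Real.dist_eq, dist_eq_norm]
    refine (hVlip a b).trans (mul_le_mul_of_nonneg_right ?_ (norm_nonneg _))
    exact Real.le_coe_toNNReal L_V
  -- nonnegativity of the Lipschitz constant of S
  have hLS : 0 ≤ L_S := by
    have h := hSlip (EuclideanSpace.single (⟨0, hn⟩ : Fin n) (1 : ℝ)) 0
    rw [sub_zero, EuclideanSpace.norm_single, norm_one, mul_one] at h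
    exact (abs_nonneg _).trans h
  have hC' : 0 ≤ C := hC.le
  have htδm : t + δ ∈ Icc 0 T := ⟨by linarith [ht.1], htδ⟩
  have hbddA : ∀ t' ∈ Icc 0 T, ∀ x' : EuclideanSpace ℝ (Fin n),
      BddBelow {r | ∃ u : ℝ → EuclideanSpace ℝ (Fin n), IsAdmissible C u ∧
        r = action T ν W V S t' x' u} := fun t' ht' x' =>
    value_bddBelow hW hVc hVbdd hSlip hLS hC' ht' x'
  have hAne : ∀ (t' : ℝ) (x' : EuclideanSpace ℝ (Fin n)),
      {r | ∃ u : ℝ → EuclideanSpace ℝ (Fin n), IsAdmissible C u ∧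
        r = action T ν W V S t' x' u}.Nonempty := fun t' x' =>
    ⟨_, ⟨_, zero_admissible hC', rfl⟩⟩
  have hns : ∀ᵐ r : ℝ, r ≠ t + δ := by
    rw [ae_iff]
    simp only [ne_eq, not_not, Set.setOf_eq_eq_singleton]
    exact Real.volume_singleton
  -- KEY 1 : value t x is a lower bound of the Bellman set
  have key1 : ∀ u : ℝ → EuclideanSpace ℝ (Fin n), IsAdmissible C u →
      value T ν C W V S t x ≤
        (∫ s in t..(t + δ), (‖u s‖ ^ 2 / 2 + V (ctrlPath ν W t x u s))) +
          value T ν C W V S (t + δ) (ctrlPath ν W t x u (t + δ)) := by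
    intro u hu
    have hval2 : value T ν C W V S (t + δ) (ctrlPath ν W t x u (t + δ)) =
        sInf {r | ∃ u' : ℝ → EuclideanSpace ℝ (Fin n), IsAdmissible C u' ∧
          r = action T ν W V S (t + δ) (ctrlPath ν W t x u (t + δ)) u'} := rfl
    rw [hval2, add_comm, ← sub_le_iff_le_add]
    refine le_csInf (hAne _ _) fun r hr => ?_
    obtain ⟨u', hu', rfl⟩ := hr
    rw [sub_le_iff_le_add]
    -- glue the two controls at time t + δ
    set w : ℝ → EuclideanSpace ℝ (Fin n) := fun s => if s < t + δ then u s else u' s with hwdef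
    have hwadm : IsAdmissible C w := by
      constructor
      · exact Measurable.ite measurableSet_Iio hu.1 hu'.1
      · intro s
        by_cases h : s < t + δ
        · simpa [hwdef, h] using hu.2 s
        · simpa [hwdef, h] using hu'.2 s
    have hwleft : ∀ s, s < t + δ → w s = u s := fun s hs => if_pos hs
    have hwright : ∀ s, t + δ ≤ s → w s = u' s := fun s hs => if_neg (not_lt.2 hs)
    have hintleft : ∀ s, s ≤ t + δ → (∫ r in t..s, w r) = ∫ r in t..s, u r := by
      intro s hs
      refine intervalIntegral.integral_congr_ae ?_
      filter_upwards [hns] with r hr hrI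
      have hle : r ≤ t + δ := by
        rcases Set.mem_uIoc.1 hrI with ⟨_, h2⟩ | ⟨_, h2⟩
        · exact h2.trans hs
        · exact h2.trans (by linarith)
      exact hwleft r (lt_of_le_of_ne hle hr)
    have hz : ctrlPath ν W t x w (t + δ) = ctrlPath ν W t x u (t + δ) := by
      unfold ctrlPath; rw [hintleft _ le_rfl]
    have hpathleft : ∀ s, s ≤ t + δ → ctrlPath ν W t x w s = ctrlPath ν W t x u s := by
      intro s hs; unfold ctrlPath; rw [hintleft s hs]
    have hlagrleft : (∫ s in t..(t + δ), (‖w s‖ ^ 2 / 2 + V (ctrlPath ν W t x w s)))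
        = ∫ s in t..(t + δ), (‖u s‖ ^ 2 / 2 + V (ctrlPath ν W t x u s)) := by
      refine intervalIntegral.integral_congr_ae ?_
      filter_upwards [hns] with r hr hrI
      have hle : r ≤ t + δ := by
        rcases Set.mem_uIoc.1 hrI with ⟨_, h2⟩ | ⟨_, h2⟩
        · exact h2
        · exact h2.trans (by linarith)
      rw [hwleft r (lt_of_le_of_ne hle hr), hpathleft r hle]
    have hintright : ∀ (z : EuclideanSpace ℝ (Fin n)) (s : ℝ), t + δ ≤ s →
        ctrlPath ν W (t + δ) z w s = ctrlPath ν W (t + δ) z u' s := by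
      intro z s hs
      unfold ctrlPath
      rw [intervalIntegral.integral_congr (g := u') fun r hr => ?_]
      rw [Set.uIcc_of_le hs] at hr
      exact hwright r hr.1
    have hactright : action T ν W V S (t + δ) (ctrlPath ν W t x u (t + δ)) w
        = action T ν W V S (t + δ) (ctrlPath ν W t x u (t + δ)) u' := by
      unfold action
      rw [hintright _ T htδ]
      congr 1
      refine intervalIntegral.integral_congr fun s hs => ?_
      rw [Set.uIcc_of_le htδ] at hs
      rw [hwright s hs.1, hintright _ s hs.1]
    have hsplit := action_split (ν := ν) (S := S) hW hVc hVbdd hwadm x ht htδm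
    have hchain : action T ν W V S t x w =
        (∫ s in t..(t + δ), (‖u s‖ ^ 2 / 2 + V (ctrlPath ν W t x u s))) +
          action T ν W V S (t + δ) (ctrlPath ν W t x u (t + δ)) u' := by
      rw [hsplit, hlagrleft, hz, hactright]
    have hle : value T ν C W V S t x ≤ action T ν W V S t x w :=
      csInf_le (hbddA t ht x) ⟨w, hwadm, rfl⟩
    linarith [hle, hchain]
  -- assemble the two inequalities
  apply le_antisymm
  · refine le_csInf ⟨_, ⟨_, zero_admissible hC', rfl⟩⟩ fun r hr => ?_
    obtain ⟨u, hu, rfl⟩ := hr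
    exact key1 u hu
  · have hbddR : BddBelow {r | ∃ u : ℝ → EuclideanSpace ℝ (Fin n), IsAdmissible C u ∧
        r = (∫ s in t..(t + δ), (‖u s‖ ^ 2 / 2 + V (ctrlPath ν W t x u s))) +
          value T ν C W V S (t + δ) (ctrlPath ν W t x u (t + δ))} :=
      ⟨value T ν C W V S t x, fun r hr => by
        obtain ⟨u, hu, rfl⟩ := hr; exact key1 u hu⟩
    have hvalt : value T ν C W V S t x = sInf {r | ∃ u : ℝ → EuclideanSpace ℝ (Fin n),
        IsAdmissible C u ∧ r = action T ν W V S t x u} := rfl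
    rw [hvalt]
    refine le_csInf (hAne t x) fun r hr => ?_
    obtain ⟨u, hu, rfl⟩ := hr
    have hsplit := action_split (ν := ν) (S := S) hW hVc hVbdd hu x ht htδm
    have h1 : value T ν C W V S (t + δ) (ctrlPath ν W t x u (t + δ)) ≤
        action T ν W V S (t + δ) (ctrlPath ν W t x u (t + δ)) u :=
      csInf_le (hbddA _ htδm _) ⟨u, hu, rfl⟩
    have h3 := csInf_le hbddR ⟨u, hu, rfl⟩
    linarith [hsplit, h1, h3]
end
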